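/- arXiv:1309.3339 — 6 statements merged into one kernel-verified Lean document; each statement's English description precedes it below -/
import Mathlib

section
/- Variance inflation factor for IS² (Theorem 2): Suppose that for every θ ∈ Θ the conditional law g_N(·|θ) of z is the Gaussian N(−σ²/2, σ²) with a fixed σ² > 0. Then the asymptotic variance of the IS² estimator, σ²_{IS²}(φ) = E_π[(φ(θ) − E_π(φ))² (π(θ)/g(θ)) E_{g_N(·|θ)}[exp(2z)]], and the asymptotic variance of the exact-likelihood IS estimator, σ²_{IS}(φ) = E_π[(φ(θ) − E_π(φ))² (π(θ)/g(θ))], satisfy σ²_{IS²}(φ) = exp(σ²) · σ²_{IS}(φ). -/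
open MeasureTheory ProbabilityTheory
open scoped ProbabilityTheory ENNReal NNReal

lemma gaussianPDFReal_mul_exp (μ : ℝ) (v : ℝ≥0) (hv : v ≠ 0) (x : ℝ) :
    gaussianPDFReal μ v x * Real.exp (2 * x)
      = Real.exp (2 * μ + 2 * v) * gaussianPDFReal (μ + 2 * v) v x := by
  have hv' : (v : ℝ) ≠ 0 := by exact_mod_cast hv
  simp only [gaussianPDFReal]
  have hexp : -(x - μ) ^ 2 / (2 * (v : ℝ)) + 2 * x
      = -(x - (μ + 2 * v)) ^ 2 / (2 * (v : ℝ)) + (2 * μ + 2 * v) := by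
    field_simp
    ring
  rw [mul_assoc, ← Real.exp_add, hexp, Real.exp_add]
  ring

lemma integral_exp_two_mul_gaussianReal (μ : ℝ) {v : ℝ≥0} (hv : v ≠ 0) :
    ∫ z, Real.exp (2 * z) ∂(gaussianReal μ v) = Real.exp (2 * μ + 2 * v) := by
  rw [gaussianReal_of_var_ne_zero μ hv]
  have hd : (gaussianPDF μ v) = fun x => ((gaussianPDFReal μ v x).toNNReal : ℝ≥0∞) := by
    funext x
    simp [gaussianPDF, ENNReal.ofReal]
  rw [hd, integral_withDensity_eq_integral_smul
      (by exact (measurable_gaussianPDFReal μ v).real_toNNReal)]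
  have : ∀ x : ℝ, (Real.toNNReal (gaussianPDFReal μ v x)) • Real.exp (2 * x)
      = Real.exp (2 * μ + 2 * v) * gaussianPDFReal (μ + 2 * v) v x := by
    intro x
    rw [NNReal.smul_def, smul_eq_mul, Real.coe_toNNReal _ (gaussianPDFReal_nonneg μ v x),
      gaussianPDFReal_mul_exp μ v hv x]
  simp_rw [this]
  rw [integral_const_mul, integral_gaussianPDFReal_eq_one _ hv, mul_one]

/-- **Variance inflation factor for IS²** (Theorem 2).
Suppose that for every `θ` the conditional law `g_N(·|θ)` of the log-likelihood-estimate
error `z` is Gaussian `N(−σ²/2, σ²)` with a fixed `σ² > 0`.  With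
`σ²_{IS²}(φ) = E_π[(φ − E_π(φ))² (π/g) E_{g_N(·|θ)}(e^{2z})]` and
`σ²_{IS}(φ) = E_π[(φ − E_π(φ))² (π/g)]` (the asymptotic variances of the IS estimator with
estimated and exact likelihood, respectively), one has `σ²_{IS²}(φ) = e^{σ²} σ²_{IS}(φ)`. -/
theorem is2_variance_inflation_factor
    {Θ : Type*} [MeasurableSpace Θ] (ν : Measure Θ) [SigmaFinite ν]
    (πd g : Θ → ℝ) (φ : Θ → ℝ)
    (hπ_nonneg : ∀ θ, 0 ≤ πd θ) (hg_nonneg : ∀ θ, 0 ≤ g θ)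
    (hπ_meas : Measurable πd) (hg_meas : Measurable g) (hφ_meas : Measurable φ)
    (hπ_prob : ∫ θ, πd θ ∂ν = 1) (hg_prob : ∫ θ, g θ ∂ν = 1)
    (hsupp : ∀ θ, 0 < πd θ → 0 < g θ)
    (σ2 : ℝ) (hσ2 : 0 < σ2)
    (gN : Kernel Θ ℝ)
    (hgN : ∀ θ, gN θ = gaussianReal (-σ2 / 2) (Real.toNNReal σ2))
    -- E_π(φ) exists and is finite, with value m
    (hφ_int : Integrable (fun θ => φ θ * πd θ) ν)
    (m : ℝ) (hm : m = ∫ θ, φ θ * πd θ ∂ν)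
    -- σ²_{IS}(φ) = E_π[(φ − E_π(φ))² π/g] is finite
    (hIS_int : Integrable (fun θ => (φ θ - m) ^ 2 * (πd θ / g θ) * πd θ) ν) :
    ∫ θ, (φ θ - m) ^ 2 * (πd θ / g θ) * (∫ z, Real.exp (2 * z) ∂(gN θ)) * πd θ ∂ν
      = Real.exp σ2 * ∫ θ, (φ θ - m) ^ 2 * (πd θ / g θ) * πd θ ∂ν := by
  have hv : Real.toNNReal σ2 ≠ 0 := by
    simp [Real.toNNReal_eq_zero, not_le, hσ2]
  have hkey : ∀ θ, ∫ z, Real.exp (2 * z) ∂(gN θ) = Real.exp σ2 := by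
    intro θ
    rw [hgN θ, integral_exp_two_mul_gaussianReal _ hv,
      Real.coe_toNNReal _ hσ2.le]
    ring_nf
  have heq : ∀ θ, (φ θ - m) ^ 2 * (πd θ / g θ) * (∫ z, Real.exp (2 * z) ∂(gN θ)) * πd θ
      = Real.exp σ2 * ((φ θ - m) ^ 2 * (πd θ / g θ) * πd θ) := by
    intro θ; rw [hkey θ]; ring
  simp_rw [heq]
  exact integral_const_mul _ _
end

section
/- Variance bound for the IS² marginal-likelihood estimator (Lemma 3(ii)): Under the IS² setup, if ∫_Θ (π(θ)/g(θ))² (∫ exp(2z) g_N(z|θ) dz) g(θ) dθ ≤ C < ∞, where g_N(·|θ) is the conditional law of z = log L̂(θ,ξ) − log L(θ) given θ, then there is a finite constant K (one may take K = p(y)² C) such that the variance of p̂_{IS²}(y) = (1/M) Σ_{i=1}^M w̃_i satisfies Var(p̂_{IS²}(y)) ≤ K/M for every M ≥ 1. -/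
open MeasureTheory ProbabilityTheory Filter
open scoped ProbabilityTheory ENNReal

/-!
The weights `w̃ᵢ` are i.i.d. copies of `w = p L̂ / g` under `(g ν) ⊗ Q`, so the variance of their
mean is at most `E[w²] / M`. Integrating `ξ` out first gives `E[w²] = ∫ p² / g · E_{Q_θ}[L̂²] dν`,
and since `π = p L / p(y)` the integrand is `p(y)² (π / g)² E_{Q_θ}[(L̂ / L)²] g`; where `L θ = 0`,
unbiasedness and `L̂ ≥ 0` force `L̂ (θ, ·) = 0` almost surely, so both sides vanish.
-/noncomputable def sampleMean {Ω : Type*} (Y : ℕ → Ω → ℝ) (M : ℕ) : Ω → ℝ :=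
  fun ω => (1 / (M : ℝ)) * ∑ i ∈ Finset.range M, Y i ω

section SampleMean

variable {Ω α : Type*} [MeasurableSpace Ω] [MeasurableSpace α] {P : Measure Ω}
  {Y : ℕ → Ω → ℝ}

theorem variance_sampleMean_le (hY : ∀ i, MemLp (Y i) 2 P)
    (hindep : Pairwise fun i j => Y i ⟂ᵢ[P] Y j) {B : ℝ} (hB : ∀ i, variance (Y i) P ≤ B)
    (M : ℕ) : variance (sampleMean Y M) P ≤ B / M := by
  have hsum : variance (∑ i ∈ Finset.range M, Y i) P ≤ M * B := calc
    variance (∑ i ∈ Finset.range M, Y i) P = ∑ i ∈ Finset.range M, variance (Y i) P :=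
      IndepFun.variance_sum (fun i _ => hY i) fun i _ j _ hij => hindep hij
    _ ≤ ∑ _i ∈ Finset.range M, B := Finset.sum_le_sum fun i _ => hB i
    _ = M * B := by rw [Finset.sum_const, Finset.card_range, nsmul_eq_mul]
  calc variance (sampleMean Y M) P
        = (1 / (M : ℝ)) ^ 2 * variance (∑ i ∈ Finset.range M, Y i) P := by
        unfold sampleMean
        simp only [← variance_const_mul, Finset.sum_apply]
    _ ≤ (1 / (M : ℝ)) ^ 2 * (M * B) := by gcongr
    _ = B / M := by
        rcases eq_or_ne (M : ℝ) 0 with hM | hM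
        · simp [hM]
        · field_simp

theorem variance_sampleMean_eq_zero_of_not_memLp [IsFiniteMeasure P]
    (hY_nonneg : ∀ i ω, 0 ≤ Y i ω) (hY_meas : ∀ i, AEStronglyMeasurable (Y i) P)
    {i M : ℕ} (hi : i < M) (hYi : ¬ MemLp (Y i) 2 P) : variance (sampleMean Y M) P = 0 := by
  have hmeas : AEStronglyMeasurable (sampleMean Y M) P :=
    (Finset.aestronglyMeasurable_fun_sum _ fun j _ => hY_meas j).const_mul _
  refine variance_of_not_memLp hmeas fun hmean => hYi ?_
  have hM : (M : ℝ) ≠ 0 := Nat.cast_ne_zero.2 (by omega)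
  refine (hmean.const_mul (M : ℝ)).of_le (hY_meas i) (Eventually.of_forall fun ω => ?_)
  have hle : Y i ω ≤ ∑ j ∈ Finset.range M, Y j ω :=
    Finset.single_le_sum (fun j _ => hY_nonneg j ω) (Finset.mem_range.2 hi)
  rw [Real.norm_of_nonneg (hY_nonneg i ω), Real.norm_eq_abs]
  simp only [sampleMean]
  rw [← mul_assoc, mul_one_div_cancel hM, one_mul]
  exact hle.trans (le_abs_self _)

/- If `f` is not square integrable, both sides are the junk value `0` of `variance` and of the
Bochner integral (for `M ≥ 1`). -/
theorem variance_sampleMean_comp_le [IsProbabilityMeasure P] {μ : Measure α} {X : ℕ → Ω → α}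
    (hX : ∀ i, Measurable (X i)) (hindep : Pairwise fun i j => X i ⟂ᵢ[P] X j)
    (hlaw : ∀ i, P.map (X i) = μ)
    {f : α → ℝ} (hf : Measurable f) (hf_nonneg : ∀ x, 0 ≤ f x) (M : ℕ) :
    variance (sampleMean (fun i ω => f (X i ω)) M) P ≤ (∫ x, f x ^ 2 ∂μ) / M := by
  have hmemLp_iff : ∀ i, MemLp (fun ω => f (X i ω)) 2 P ↔ MemLp f 2 μ := fun i => by
    rw [← hlaw i, memLp_map_measure_iff hf.aestronglyMeasurable (hX i).aemeasurable]; rfl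
  by_cases hf2 : MemLp f 2 μ
  · refine variance_sampleMean_le (fun i => (hmemLp_iff i).2 hf2)
      (fun i j hij => (hindep hij).comp hf hf) (fun i => ?_) M
    refine (variance_le_expectation_sq (hf.comp (hX i)).aestronglyMeasurable).trans_eq ?_
    rw [← hlaw i, integral_map (hX i).aemeasurable (hf.pow_const 2).aestronglyMeasurable]
    rfl
  · rcases Nat.eq_zero_or_pos M with rfl | hM
    · unfold sampleMean
      simp only [Finset.range_zero, Finset.sum_empty, mul_zero, CharP.cast_eq_zero, div_zero]
      exact (variance_zero P).le
    rw [variance_sampleMean_eq_zero_of_not_memLp (fun i ω => hf_nonneg _)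
      (fun i => (hf.comp (hX i)).aestronglyMeasurable) hM (mt (hmemLp_iff 0).1 hf2)]
    exact div_nonneg (integral_nonneg fun x => sq_nonneg _) M.cast_nonneg

end SampleMean

section ImportanceWeights

variable {Θ Ξ : Type*} [MeasurableSpace Θ] [MeasurableSpace Ξ]

noncomputable def is2Weight (p g : Θ → ℝ) (Lhat : Θ × Ξ → ℝ) (x : Θ × Ξ) : ℝ :=
  p x.1 * Lhat x / g x.1

theorem measurable_is2Weight {p g : Θ → ℝ} {Lhat : Θ × Ξ → ℝ} (hp : Measurable p)
    (hg : Measurable g) (hLhat : Measurable Lhat) : Measurable (is2Weight p g Lhat) :=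
  ((hp.comp measurable_fst).mul hLhat).div (hg.comp measurable_fst)

theorem integral_sq_eq_zero_of_integral_eq_zero {κ : Measure Ξ} [IsFiniteMeasure κ]
    {ℓ : Ξ → ℝ} (hℓ : 0 ≤ᵐ[κ] ℓ) (hℓm : AEStronglyMeasurable ℓ κ) (h : ∫ ξ, ℓ ξ ∂κ = 0) :
    ∫ ξ, ℓ ξ ^ 2 ∂κ = 0 := by
  by_cases hsq : Integrable (fun ξ => ℓ ξ ^ 2) κ
  · have hint : Integrable ℓ κ :=
      ((memLp_two_iff_integrable_sq hℓm).2 hsq).integrable one_le_two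
    have hzero : ℓ =ᵐ[κ] 0 := (integral_eq_zero_iff_of_nonneg_ae hℓ hint).1 h
    rw [integral_congr_ae (g := fun _ => 0) (hzero.mono fun ξ hξ => by simp [hξ]),
      integral_zero]
  · exact integral_undef hsq

theorem sq_mul_posterior_second_moment_eq {κ : Measure Ξ} [IsFiniteMeasure κ] {ℓ : Ξ → ℝ}
    (hℓ : 0 ≤ᵐ[κ] ℓ) (hℓm : AEStronglyMeasurable ℓ κ) (p g py : ℝ) (hpy : py ≠ 0) :
    py ^ 2 * ((p * (∫ ξ, ℓ ξ ∂κ) / py / g) ^ 2 * (∫ ξ, (ℓ ξ / ∫ ξ, ℓ ξ ∂κ) ^ 2 ∂κ) * g)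
      = p ^ 2 / g * ∫ ξ, ℓ ξ ^ 2 ∂κ := by
  set L := ∫ ξ, ℓ ξ ∂κ
  have hdiv : ∫ ξ, (ℓ ξ / L) ^ 2 ∂κ = (∫ ξ, ℓ ξ ^ 2 ∂κ) / L ^ 2 := by
    simp_rw [div_pow]
    exact integral_div _ _
  rw [hdiv]
  rcases eq_or_ne L 0 with hL | hL
  · simp [hL, integral_sq_eq_zero_of_integral_eq_zero hℓ hℓm hL]
  rcases eq_or_ne g 0 with hg | hg
  · simp [hg]
  field_simp

theorem ofReal_mul_lintegral_ofReal_eq {κ : Measure Ξ} {c : ℝ} (hc : 0 ≤ c) {h : Ξ → ℝ}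
    (hh : 0 ≤ᵐ[κ] h) (hhm : AEStronglyMeasurable h κ)
    (hfin : ENNReal.ofReal c * ∫⁻ ξ, ENNReal.ofReal (h ξ) ∂κ ≠ ∞) :
    ENNReal.ofReal c * ∫⁻ ξ, ENNReal.ofReal (h ξ) ∂κ = ENNReal.ofReal (c * ∫ ξ, h ξ ∂κ) := by
  rcases hc.eq_or_lt with rfl | hc
  · simp
  have hint : Integrable h κ :=
    ⟨hhm, (hasFiniteIntegral_iff_ofReal hh).2
      (ENNReal.lt_top_of_mul_ne_top_right hfin (ENNReal.ofReal_pos.2 hc).ne')⟩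
  rw [ENNReal.ofReal_mul hc.le, ofReal_integral_eq_lintegral_ofReal hint hh]

theorem lintegral_ofReal_sq_is2Weight (ν : Measure Θ) [SFinite ν] (Q : Kernel Θ Ξ)
    [IsSFiniteKernel Q] {p g : Θ → ℝ} {Lhat : Θ × Ξ → ℝ} (hp : Measurable p)
    (hg : Measurable g) (hLhat : Measurable Lhat) (hg_nonneg : ∀ θ, 0 ≤ g θ) :
    ∫⁻ x, ENNReal.ofReal (is2Weight p g Lhat x ^ 2)
        ∂((ν.withDensity fun θ => ENNReal.ofReal (g θ)) ⊗ₘ Q)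
      = ∫⁻ θ, ENNReal.ofReal (p θ ^ 2 / g θ) *
          ∫⁻ ξ, ENNReal.ofReal (Lhat (θ, ξ) ^ 2) ∂(Q θ) ∂ν := by
  have hw : Measurable fun x => ENNReal.ofReal (is2Weight p g Lhat x ^ 2) :=
    ((measurable_is2Weight hp hg hLhat).pow_const 2).ennreal_ofReal
  rw [Measure.lintegral_compProd hw, lintegral_withDensity_eq_lintegral_mul ν hg.ennreal_ofReal
    hw.lintegral_kernel_prod_right]
  refine lintegral_congr fun θ => ?_
  rw [Pi.mul_apply, ← lintegral_const_mul' _ _ ENNReal.ofReal_ne_top,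
    ← lintegral_const_mul' _ _ ENNReal.ofReal_ne_top]
  refine lintegral_congr fun ξ => ?_
  rw [← ENNReal.ofReal_mul (hg_nonneg θ),
    ← ENNReal.ofReal_mul (div_nonneg (sq_nonneg _) (hg_nonneg θ))]
  rcases eq_or_ne (g θ) 0 with hg0 | hg0
  · simp [is2Weight, hg0]
  · simp only [is2Weight]
    field_simp

theorem integral_sq_is2Weight_le (ν : Measure Θ) [SFinite ν] (Q : Kernel Θ Ξ) [IsFiniteKernel Q]
    {p L g πd : Θ → ℝ} {Lhat : Θ × Ξ → ℝ} (hp : Measurable p) (hg : Measurable g)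
    (hLhat : Measurable Lhat) (hg_nonneg : ∀ θ, 0 ≤ g θ) (hLhat_nonneg : ∀ x, 0 ≤ Lhat x)
    (hunbiased : ∀ θ, ∫ ξ, Lhat (θ, ξ) ∂(Q θ) = L θ) {py : ℝ} (hpy : py ≠ 0)
    (hπd : ∀ θ, πd θ = p θ * L θ / py) {C : ℝ} (hC_nonneg : 0 ≤ C)
    (hC : ∫⁻ θ, ENNReal.ofReal
        ((πd θ / g θ) ^ 2 * (∫ ξ, (Lhat (θ, ξ) / L θ) ^ 2 ∂(Q θ)) * g θ) ∂ν
      ≤ ENNReal.ofReal C) :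
    ∫ x, is2Weight p g Lhat x ^ 2 ∂((ν.withDensity fun θ => ENNReal.ofReal (g θ)) ⊗ₘ Q)
      ≤ py ^ 2 * C := by
  have hLhat_sq : ∀ θ, Measurable fun ξ => Lhat (θ, ξ) ^ 2 := fun θ =>
    (hLhat.comp measurable_prodMk_left).pow_const 2
  rw [integral_eq_lintegral_of_nonneg_ae (ae_of_all _ fun x => sq_nonneg _)
    ((measurable_is2Weight hp hg hLhat).pow_const 2).aestronglyMeasurable]
  by_cases hfin : ∫⁻ x, ENNReal.ofReal (is2Weight p g Lhat x ^ 2)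
      ∂((ν.withDensity fun θ => ENNReal.ofReal (g θ)) ⊗ₘ Q) = ∞
  · rw [hfin, ENNReal.toReal_top]
    positivity
  refine ENNReal.toReal_le_of_le_ofReal (by positivity) ?_
  rw [lintegral_ofReal_sq_is2Weight ν Q hp hg hLhat hg_nonneg] at hfin ⊢
  have hmeas : Measurable fun θ => ENNReal.ofReal (p θ ^ 2 / g θ) *
      ∫⁻ ξ, ENNReal.ofReal (Lhat (θ, ξ) ^ 2) ∂(Q θ) :=
    ((hp.pow_const 2).div hg).ennreal_ofReal.mul
      ((hLhat.pow_const 2).ennreal_ofReal.lintegral_kernel_prod_right)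
  -- `hC` has Bochner inner integrals, which are junk `0` where `L̂ (θ, ·)` is not square
  -- integrable; finiteness of `E[w²]` excludes this for `ν`-a.e. `θ` with `p θ ^ 2 / g θ ≠ 0`.
  have hpointwise : ∀ᵐ θ ∂ν, ENNReal.ofReal (p θ ^ 2 / g θ) *
      ∫⁻ ξ, ENNReal.ofReal (Lhat (θ, ξ) ^ 2) ∂(Q θ) = ENNReal.ofReal (py ^ 2) * ENNReal.ofReal
        ((πd θ / g θ) ^ 2 * (∫ ξ, (Lhat (θ, ξ) / L θ) ^ 2 ∂(Q θ)) * g θ) := by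
    filter_upwards [ae_lt_top hmeas hfin] with θ hθ
    rw [ofReal_mul_lintegral_ofReal_eq (div_nonneg (sq_nonneg _) (hg_nonneg θ))
        (ae_of_all _ fun _ => sq_nonneg _) (hLhat_sq θ).aestronglyMeasurable hθ.ne,
      ← ENNReal.ofReal_mul (sq_nonneg py), hπd θ, ← hunbiased θ,
      sq_mul_posterior_second_moment_eq (ae_of_all _ fun ξ => hLhat_nonneg _)
        (hLhat.comp measurable_prodMk_left).aestronglyMeasurable _ _ _ hpy]
  calc _ = ∫⁻ θ, ENNReal.ofReal (py ^ 2) * ENNReal.ofReal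
          ((πd θ / g θ) ^ 2 * (∫ ξ, (Lhat (θ, ξ) / L θ) ^ 2 ∂(Q θ)) * g θ) ∂ν :=
        lintegral_congr_ae hpointwise
    _ = ENNReal.ofReal (py ^ 2) * ∫⁻ θ, ENNReal.ofReal
          ((πd θ / g θ) ^ 2 * (∫ ξ, (Lhat (θ, ξ) / L θ) ^ 2 ∂(Q θ)) * g θ) ∂ν :=
        lintegral_const_mul' _ _ ENNReal.ofReal_ne_top
    _ ≤ ENNReal.ofReal (py ^ 2) * ENNReal.ofReal C := by gcongr
    _ = ENNReal.ofReal (py ^ 2 * C) := (ENNReal.ofReal_mul (sq_nonneg py)).symm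

end ImportanceWeights

theorem is2_marginal_likelihood_variance_bound_general
    {Θ Ξ Ω : Type*} [MeasurableSpace Θ] [MeasurableSpace Ξ] [MeasurableSpace Ω]
    (P : Measure Ω) [IsProbabilityMeasure P]
    (ν : Measure Θ) [SigmaFinite ν]
    (p L g : Θ → ℝ)
    (hp_nonneg : ∀ θ, 0 ≤ p θ) (hg_nonneg : ∀ θ, 0 ≤ g θ)
    (hp_meas : Measurable p) (hg_meas : Measurable g)
    (py : ℝ) (hpy_pos : 0 < py)
    -- posterior density
    (πd : Θ → ℝ) (hπd : ∀ θ, πd θ = p θ * L θ / py)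
    -- unbiased likelihood estimator
    (Q : Kernel Θ Ξ) [IsMarkovKernel Q]
    (Lhat : Θ × Ξ → ℝ) (hLhat_meas : Measurable Lhat) (hLhat_nonneg : ∀ x, 0 ≤ Lhat x)
    (hunbiased : ∀ θ, ∫ ξ, Lhat (θ, ξ) ∂(Q θ) = L θ)
    -- i.i.d. draws (θ_i, ξ_i) with θ_i ~ g and ξ_i | θ_i ~ Q_{θ_i}
    (X : ℕ → Ω → Θ × Ξ) (hX_meas : ∀ i, Measurable (X i))
    (hX_indep : iIndepFun X P)
    (hX_law : ∀ i, P.map (X i) = (ν.withDensity fun θ => ENNReal.ofReal (g θ)) ⊗ₘ Q)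
    -- second-moment bound: ∫ (π/g)² (∫ e^{2z} g_N(z|θ) dz) g dν ≤ C < ∞
    (C : ℝ) (hC_nonneg : 0 ≤ C)
    (hC : ∫⁻ θ, ENNReal.ofReal
        ((πd θ / g θ) ^ 2 * (∫ ξ, (Lhat (θ, ξ) / L θ) ^ 2 ∂(Q θ)) * g θ) ∂ν
      ≤ ENNReal.ofReal C) :
    ∀ M : ℕ, 1 ≤ M →
      variance (fun ω => (1 / (M : ℝ)) *
          ∑ i ∈ Finset.range M, p (X i ω).1 * Lhat (X i ω) / g ((X i ω).1)) P
        ≤ py ^ 2 * C / M := by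
  intro M _
  calc _ ≤ (∫ x, is2Weight p g Lhat x ^ 2
          ∂((ν.withDensity fun θ => ENNReal.ofReal (g θ)) ⊗ₘ Q)) / M :=
        variance_sampleMean_comp_le hX_meas (fun i j hij => hX_indep.indepFun hij) hX_law
          (measurable_is2Weight hp_meas hg_meas hLhat_meas)
          (fun x => div_nonneg (mul_nonneg (hp_nonneg _) (hLhat_nonneg x)) (hg_nonneg _)) M
    _ ≤ py ^ 2 * C / M := by
        gcongr
        exact integral_sq_is2Weight_le ν Q hp_meas hg_meas hLhat_meas hg_nonneg hLhat_nonneg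
          hunbiased hpy_pos.ne' hπd hC_nonneg hC

/-- **Variance bound for the IS² marginal-likelihood estimator** (Lemma 3(ii)).
Under the IS² setup, if `∫ (π/g)² (∫ e^{2z} g_N(z|θ) dz) g dν ≤ C < ∞`, where
`g_N(·|θ)` is the conditional law of `z = log L̂(θ,ξ) − log L(θ)` given `θ` (so that
`∫ e^{2z} g_N(z|θ) dz = ∫ (L̂(θ,ξ)/L(θ))² dQ_θ`), then with `K = p(y)² C` one has
`Var(p̂_{IS²}(y)) ≤ K/M` for every `M ≥ 1`, where `p̂_{IS²}(y) = (1/M) ∑ w̃_i`. -/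
theorem is2_marginal_likelihood_variance_bound
    {Θ Ξ Ω : Type*} [MeasurableSpace Θ] [MeasurableSpace Ξ] [MeasurableSpace Ω]
    (P : Measure Ω) [IsProbabilityMeasure P]
    (ν : Measure Θ) [SigmaFinite ν]
    (p L g : Θ → ℝ)
    (hp_nonneg : ∀ θ, 0 ≤ p θ) (hL_nonneg : ∀ θ, 0 ≤ L θ) (hg_nonneg : ∀ θ, 0 ≤ g θ)
    (hp_meas : Measurable p) (hL_meas : Measurable L) (hg_meas : Measurable g)
    (hg_prob : ∫ θ, g θ ∂ν = 1)
    (hpL_int : Integrable (fun θ => p θ * L θ) ν)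
    (py : ℝ) (hpy : py = ∫ θ, p θ * L θ ∂ν) (hpy_pos : 0 < py)
    -- posterior density
    (πd : Θ → ℝ) (hπd : ∀ θ, πd θ = p θ * L θ / py)
    -- support condition: Supp(π) ⊆ Supp(g)
    (hsupp : ∀ θ, 0 < πd θ → 0 < g θ)
    -- unbiased likelihood estimator
    (Q : Kernel Θ Ξ) [IsMarkovKernel Q]
    (Lhat : Θ × Ξ → ℝ) (hLhat_meas : Measurable Lhat) (hLhat_nonneg : ∀ x, 0 ≤ Lhat x)
    (hunbiased : ∀ θ, ∫ ξ, Lhat (θ, ξ) ∂(Q θ) = L θ)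
    -- i.i.d. draws (θ_i, ξ_i) with θ_i ~ g and ξ_i | θ_i ~ Q_{θ_i}
    (X : ℕ → Ω → Θ × Ξ) (hX_meas : ∀ i, Measurable (X i))
    (hX_indep : iIndepFun X P)
    (hX_law : ∀ i, P.map (X i) = (ν.withDensity fun θ => ENNReal.ofReal (g θ)) ⊗ₘ Q)
    -- second-moment bound: ∫ (π/g)² (∫ e^{2z} g_N(z|θ) dz) g dν ≤ C < ∞
    (C : ℝ) (hC_nonneg : 0 ≤ C)
    (hC : ∫⁻ θ, ENNReal.ofReal
        ((πd θ / g θ) ^ 2 * (∫ ξ, (Lhat (θ, ξ) / L θ) ^ 2 ∂(Q θ)) * g θ) ∂ν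
      ≤ ENNReal.ofReal C) :
    ∀ M : ℕ, 1 ≤ M →
      variance (fun ω => (1 / (M : ℝ)) *
          ∑ i ∈ Finset.range M, p (X i ω).1 * Lhat (X i ω) / g ((X i ω).1)) P
        ≤ py ^ 2 * C / M :=
  is2_marginal_likelihood_variance_bound_general P ν p L g hp_nonneg hg_nonneg hp_meas hg_meas py
    hpy_pos πd hπd Q Lhat hLhat_meas hLhat_nonneg hunbiased X hX_meas hX_indep hX_law C hC_nonneg hC
end

section
/- Strict convexity and explicit minimizer of the computing-time function with positive overhead (equation (14), case τ₀ > 0): For constants a > 0 and b > 0, the function CT*(x) = e^x (a + b/x) on (0, ∞) is strictly convex (its second derivative is strictly positive on (0,∞)), and it attains its unique global minimum at x* = (−b + √(b² + 4ab)) / (2a). -/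
/-!
Since `CT''(x) = eˣ (a x³ + b ((x - 1)² + 1)) / x³ > 0`, `CT` is strictly convex on `(0, ∞)`.
`CT'(x) = eˣ (a x² + b x - b) / x²` vanishes at the positive root `x*` of `a x² + b x - b`,
and a critical point of a strictly convex function is its unique minimizer.
-/

open Set

/-- `CT*(σ²)` with overhead `a = τ₀` and per-particle cost `b = τ₁ γ̄²`. -/
noncomputable def computingTime (a b x : ℝ) : ℝ := Real.exp x * (a + b / x)

noncomputable def optimalVariance (a b : ℝ) : ℝ :=
  (-b + Real.sqrt (b ^ 2 + 4 * a * b)) / (2 * a)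

theorem StrictConvexOn.lt_of_hasDerivAt_zero {S : Set ℝ} {f : ℝ → ℝ} {x₀ x : ℝ}
    (hf : StrictConvexOn ℝ S f) (hx₀ : x₀ ∈ S) (hx : x ∈ S) (hne : x ≠ x₀)
    (hf' : HasDerivAt f 0 x₀) : f x₀ < f x := by
  rcases hne.lt_or_gt with hlt | hgt
  · exact (slope_neg_iff_of_le hlt.le).mp (hf.slope_lt_of_hasDerivAt hx hx₀ hlt hf')
  · exact (slope_pos_iff_of_le hgt.le).mp (hf.lt_slope_of_hasDerivAt hx₀ hx hgt hf')

section computingTime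

variable {a b x : ℝ}

theorem hasDerivAt_computingTime (hx : x ≠ 0) :
    HasDerivAt (computingTime a b) (Real.exp x * (a + b / x - b / x ^ 2)) x := by
  have hrat : HasDerivAt (fun y => a + b / y) (-(b / x ^ 2)) x :=
    (((hasDerivAt_const x b).div (hasDerivAt_id' x) hx).const_add a).congr_deriv (by ring)
  exact ((Real.hasDerivAt_exp x).mul hrat).congr_deriv (by ring)

theorem hasDerivAt_deriv_computingTime (hx : x ≠ 0) :
    HasDerivAt (deriv (computingTime a b))
      (Real.exp x * (a + b / x - 2 * b / x ^ 2 + 2 * b / x ^ 3)) x := by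
  have hderiv : deriv (computingTime a b) =ᶠ[nhds x]
      fun y => Real.exp y * (a + b / y - b / y ^ 2) := by
    filter_upwards [eventually_ne_nhds hx] with y hy
    exact (hasDerivAt_computingTime hy).deriv
  have hrat : HasDerivAt (fun y => a + b / y - b / y ^ 2) (-(b / x ^ 2) + 2 * b / x ^ 3) x :=
    ((((hasDerivAt_const x b).div (hasDerivAt_id' x) hx).const_add a).sub
      ((hasDerivAt_const x b).div (hasDerivAt_pow 2 x) (pow_ne_zero 2 hx))).congr_deriv
      (by field_simp; ring)
  exact (((Real.hasDerivAt_exp x).mul hrat).congr_deriv (by ring)).congr_of_eventuallyEq hderiv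

theorem deriv_deriv_computingTime_pos (ha : 0 ≤ a) (hb : 0 < b) (hx : 0 < x) :
    0 < deriv (deriv (computingTime a b)) x := by
  rw [(hasDerivAt_deriv_computingTime hx.ne').deriv]
  have hfactor : a + b / x - 2 * b / x ^ 2 + 2 * b / x ^ 3
      = (a * x ^ 3 + b * ((x - 1) ^ 2 + 1)) / x ^ 3 := by
    field_simp; ring
  rw [hfactor]
  positivity

theorem strictConvexOn_computingTime (ha : 0 ≤ a) (hb : 0 < b) :
    StrictConvexOn ℝ (Ioi 0) (computingTime a b) := by
  refine strictConvexOn_of_deriv2_pos (convex_Ioi 0) ?_ ?_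
  · exact fun y hy => (hasDerivAt_computingTime (ne_of_gt hy)).continuousAt.continuousWithinAt
  · intro y hy
    rw [interior_Ioi] at hy
    simpa using deriv_deriv_computingTime_pos ha hb hy

theorem optimalVariance_pos (ha : 0 < a) (hb : 0 < b) : 0 < optimalVariance a b := by
  have hsqrt : b < Real.sqrt (b ^ 2 + 4 * a * b) :=
    (Real.lt_sqrt hb.le).mpr (by nlinarith [mul_pos ha hb])
  exact div_pos (by linarith) (by linarith)

theorem optimalVariance_isRoot (ha : 0 < a) (hb : 0 ≤ b) :
    a * (optimalVariance a b * optimalVariance a b) + b * optimalVariance a b + -b = 0 := by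
  have hdisc :
      discrim a b (-b) = Real.sqrt (b ^ 2 + 4 * a * b) * Real.sqrt (b ^ 2 + 4 * a * b) := by
    rw [Real.mul_self_sqrt (by positivity), discrim]
    ring
  exact (quadratic_eq_zero_iff ha.ne' hdisc _).mpr (Or.inl rfl)

theorem hasDerivAt_computingTime_optimalVariance (ha : 0 < a) (hb : 0 < b) :
    HasDerivAt (computingTime a b) 0 (optimalVariance a b) := by
  set x := optimalVariance a b
  have hx : x ≠ 0 := (optimalVariance_pos ha hb).ne'
  have hroot := optimalVariance_isRoot ha hb.le
  convert hasDerivAt_computingTime (a := a) (b := b) hx using 1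
  have hfactor : a + b / x - b / x ^ 2 = (a * (x * x) + b * x + -b) / x ^ 2 := by
    field_simp; ring
  rw [hfactor, hroot, zero_div, mul_zero]

end computingTime

/-- **Strict convexity and explicit minimizer of the computing-time function with positive
overhead** (equation (14), case `τ₀ > 0`).
For constants `a > 0` and `b > 0`, the function `CT*(x) = e^x (a + b/x)` on `(0, ∞)` has
strictly positive second derivative on `(0, ∞)` (hence is strictly convex there), and it
attains its unique global minimum on `(0, ∞)` at `x* = (−b + √(b² + 4ab))/(2a)`. -/
theorem computing_time_strict_convex_and_minimizer
    (a b : ℝ) (ha : 0 < a) (hb : 0 < b)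
    (CT : ℝ → ℝ) (hCT : ∀ x, CT x = Real.exp x * (a + b / x))
    (xstar : ℝ) (hxstar : xstar = (-b + Real.sqrt (b ^ 2 + 4 * a * b)) / (2 * a)) :
    (∀ x ∈ Ioi (0 : ℝ), 0 < deriv (deriv CT) x) ∧
    StrictConvexOn ℝ (Ioi (0 : ℝ)) CT ∧
    xstar ∈ Ioi (0 : ℝ) ∧
    (∀ x ∈ Ioi (0 : ℝ), x ≠ xstar → CT xstar < CT x) := by
  obtain rfl : CT = computingTime a b := funext hCT
  obtain rfl : xstar = optimalVariance a b := hxstar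
  have hconvex := strictConvexOn_computingTime ha.le hb
  have hpos := optimalVariance_pos ha hb
  refine ⟨fun x hx => deriv_deriv_computingTime_pos ha.le hb hx, hconvex, hpos, ?_⟩
  exact fun x hx hne => hconvex.lt_of_hasDerivAt_zero hpos hx hne
    (hasDerivAt_computingTime_optimalVariance ha hb)
end

section
/- Convexity of the computing-time function for marginal-likelihood estimation (Lemma 4(i)): For constants a ≥ 0, b > 0 and v > 0, the function f(x) = (a + b/x)((v+1)e^x − 1) is strictly convex on (0, ∞); consequently it has at most one minimizer, so the minimizing value σ²_min(v) is unique. -/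
/-!
Write `c = v + 1 ≥ 1` and split `f(x) = a (c eˣ - 1) + b (c eˣ - 1) / x`. The first summand is
convex because `a ≥ 0`. The second is strictly convex on `(0, ∞)`: the second derivative of
`(c eˣ - 1) / x` is `(c eˣ (x² - 2x + 2) - 2) / x³`, and `eˣ ≥ 1 + x + x²/2` gives
`eˣ (x² - 2x + 2) ≥ 2 + x⁴/2 > 2`. A strictly convex function has at most one minimizer.
-/

open Set Real

lemma StrictConvexOn.const_mul {E : Type*} [AddCommMonoid E] [Module ℝ E] {s : Set E}
    {f : E → ℝ} {c : ℝ} (hc : 0 < c) (hf : StrictConvexOn ℝ s f) :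
    StrictConvexOn ℝ s fun x => c * f x := by
  refine ⟨hf.1, fun x hx y hy hxy a b ha hb hab => ?_⟩
  have := mul_lt_mul_of_pos_left (hf.2 hx hy hxy ha hb hab) hc
  simp only [smul_eq_mul] at this ⊢
  linarith

lemma Real.two_lt_exp_mul_sq_sub_two_mul_add_two {x : ℝ} (hx : 0 < x) :
    2 < exp x * (x ^ 2 - 2 * x + 2) := by
  have hq : 0 < x ^ 2 - 2 * x + 2 := by nlinarith [sq_nonneg (x - 1)]
  calc (2 : ℝ) < (1 + x + x ^ 2 / 2) * (x ^ 2 - 2 * x + 2) := by nlinarith [pow_pos hx 4]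
    _ ≤ exp x * (x ^ 2 - 2 * x + 2) :=
      mul_le_mul_of_nonneg_right (quadratic_le_exp_of_nonneg hx.le) hq.le

lemma hasDerivAt_mul_exp_sub_one_div (c : ℝ) {x : ℝ} (hx : x ≠ 0) :
    HasDerivAt (fun y => (c * exp y - 1) / y) ((c * (x - 1) * exp x + 1) / x ^ 2) x :=
  ((((hasDerivAt_exp x).const_mul c).sub_const 1).fun_div (hasDerivAt_id' x) hx).congr_deriv
    (by ring)

lemma hasDerivAt_mul_sub_one_mul_exp_add_one_div_sq (c : ℝ) {x : ℝ} (hx : x ≠ 0) :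
    HasDerivAt (fun y => (c * (y - 1) * exp y + 1) / y ^ 2)
      ((c * exp x * (x ^ 2 - 2 * x + 2) - 2) / x ^ 3) x := by
  have hnum : HasDerivAt (fun y => c * (y - 1) * exp y + 1) (c * x * exp x) x :=
    (((((hasDerivAt_id' x).sub_const 1).const_mul c).fun_mul (hasDerivAt_exp x)).add_const
      1).congr_deriv (by ring)
  refine (hnum.fun_div (hasDerivAt_pow 2 x) (pow_ne_zero 2 hx)).congr_deriv ?_
  field_simp
  ring

lemma strictConvexOn_mul_exp_sub_one_div {c : ℝ} (hc : 1 ≤ c) :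
    StrictConvexOn ℝ (Ioi 0) fun x => (c * exp x - 1) / x := by
  refine strictConvexOn_of_deriv2_pos' (convex_Ioi 0) ?_ fun x (hx : 0 < x) => ?_
  · exact fun x hx => ((continuous_const.mul continuous_exp).sub continuous_const).continuousAt.div
      continuousAt_id (ne_of_gt hx) |>.continuousWithinAt
  have hderiv : deriv (fun y => (c * exp y - 1) / y) =ᶠ[nhds x]
      fun y => (c * (y - 1) * exp y + 1) / y ^ 2 := by
    filter_upwards [isOpen_Ioi.mem_nhds hx] with y (hy : 0 < y)
    exact (hasDerivAt_mul_exp_sub_one_div c hy.ne').deriv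
  have hsecond : deriv^[2] (fun y => (c * exp y - 1) / y) x =
      (c * exp x * (x ^ 2 - 2 * x + 2) - 2) / x ^ 3 := by
    rw [Function.iterate_succ_apply, Function.iterate_one, hderiv.deriv_eq]
    exact (hasDerivAt_mul_sub_one_mul_exp_add_one_div_sq c hx.ne').deriv
  have hq : 0 < x ^ 2 - 2 * x + 2 := by nlinarith [sq_nonneg (x - 1)]
  have hc_mul : exp x * (x ^ 2 - 2 * x + 2) ≤ c * exp x * (x ^ 2 - 2 * x + 2) := by
    rw [mul_assoc]
    exact le_mul_of_one_le_left (by positivity) hc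
  rw [hsecond]
  exact div_pos (by linarith [two_lt_exp_mul_sq_sub_two_mul_add_two hx]) (by positivity)

lemma strictConvexOn_add_div_mul_mul_exp_sub_one {a b c : ℝ} (ha : 0 ≤ a) (hb : 0 < b)
    (hc : 1 ≤ c) : StrictConvexOn ℝ (Ioi 0) fun x => (a + b / x) * (c * exp x - 1) := by
  have hlin : ConvexOn ℝ (Ioi 0) fun x => a * (c * exp x - 1) :=
    (((convexOn_exp.subset (subset_univ _) (convex_Ioi 0)).smul (by linarith)).add_const
      (-1)).smul ha
  refine (hlin.add_strictConvexOn ((strictConvexOn_mul_exp_sub_one_div hc).const_mul hb)).congr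
    fun x _ => ?_
  simp only [Pi.add_apply]
  ring

/-- **Convexity of the computing-time function for marginal-likelihood estimation**
(Lemma 4(i)).  For constants `a ≥ 0`, `b > 0` and `v > 0`, the function
`f(x) = (a + b/x)((v+1)e^x − 1)` is strictly convex on `(0, ∞)`; consequently it has at
most one minimizer on `(0, ∞)`, i.e. the minimizing value `σ²_min(v)` is unique. -/
theorem marginal_likelihood_computing_time_strict_convex
    (a b v : ℝ) (ha : 0 ≤ a) (hb : 0 < b) (hv : 0 < v)
    (f : ℝ → ℝ) (hf : ∀ x, f x = (a + b / x) * ((v + 1) * Real.exp x - 1)) :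
    StrictConvexOn ℝ (Ioi (0 : ℝ)) f ∧
    (∀ x₁ ∈ Ioi (0 : ℝ), ∀ x₂ ∈ Ioi (0 : ℝ),
      IsMinOn f (Ioi (0 : ℝ)) x₁ → IsMinOn f (Ioi (0 : ℝ)) x₂ → x₁ = x₂) := by
  obtain rfl : f = fun x => (a + b / x) * ((v + 1) * Real.exp x - 1) := funext hf
  have hconv := strictConvexOn_add_div_mul_mul_exp_sub_one ha hb (by linarith : 1 ≤ v + 1)
  exact ⟨hconv, fun x₁ hx₁ x₂ hx₂ hm₁ hm₂ => hconv.eq_of_isMinOn hm₁ hm₂ hx₁ hx₂⟩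
end

section
/- Monotonicity of the optimal variance in the weight variance (Lemma 4(ii), monotonicity part): Fix a ≥ 0 and b > 0, and for each v > 0 let x_min(v) ∈ (0, ∞) denote the unique minimizer of f_v(x) = (a + b/x)((v+1)e^x − 1) on (0, ∞). Then v ↦ x_min(v) is strictly increasing on (0, ∞): for all 0 < v₁ < v₂, x_min(v₁) < x_min(v₂). -/
/-!
Write `f_v = (v + 1) G - g` with `g x = a + b / x` and `G x = g x * exp x`. Comparing the two
minimality conditions shows that raising the coefficient of `G` can only lower `G` at the
minimizer, while moving the minimizer left raises the strictly decreasing `g`, and hence `G`.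
So `xmin v₂ < xmin v₁` is impossible; `xmin v₂ = xmin v₁` would make both `G'` and `g'` vanish
there, but `g' = -b / x² ≠ 0`.
-/

open Set

section Comparison

variable {α : Type*} {s : Set α} {G g : α → ℝ}

theorem le_of_isMinOn_mul_sub_of_lt {c₁ c₂ : ℝ} {x₁ x₂ : α} (hc : c₁ < c₂)
    (hx₁ : x₁ ∈ s) (hx₂ : x₂ ∈ s)
    (h₁ : IsMinOn (fun x => c₁ * G x - g x) s x₁)
    (h₂ : IsMinOn (fun x => c₂ * G x - g x) s x₂) :
    G x₂ ≤ G x₁ := by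
  have e₁ : c₁ * G x₁ - g x₁ ≤ c₁ * G x₂ - g x₂ := h₁ hx₂
  have e₂ : c₂ * G x₂ - g x₂ ≤ c₂ * G x₁ - g x₁ := h₂ hx₁
  nlinarith

theorem lt_of_isMinOn_mul_sub_of_lt {c : ℝ} {x y : α} (hc : 0 < c) (hy : y ∈ s)
    (hx : IsMinOn (fun x => c * G x - g x) s x) (hg : g x < g y) :
    G x < G y := by
  have e : c * G x - g x ≤ c * G y - g y := hx hy
  exact lt_of_mul_lt_mul_left (by linarith) hc.le

end Comparison

theorem hasDerivAt_eq_zero_of_isLocalMin_mul_sub {G g : ℝ → ℝ} {G' g' c₁ c₂ x : ℝ}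
    (hc : c₁ ≠ c₂) (hG : HasDerivAt G G' x) (hg : HasDerivAt g g' x)
    (h₁ : IsLocalMin (fun y => c₁ * G y - g y) x)
    (h₂ : IsLocalMin (fun y => c₂ * G y - g y) x) :
    g' = 0 := by
  have d₁ : c₁ * G' - g' = 0 := h₁.hasDerivAt_eq_zero ((hG.const_mul c₁).sub hg)
  have d₂ : c₂ * G' - g' = 0 := h₂.hasDerivAt_eq_zero ((hG.const_mul c₂).sub hg)
  have hG' : G' = 0 := by
    have : (c₁ - c₂) * G' = 0 := by linear_combination d₁ - d₂
    exact (mul_eq_zero.mp this).resolve_left (sub_ne_zero.mpr hc)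
  linear_combination -d₁ + c₁ * hG'

theorem hasDerivAt_const_add_div (a b : ℝ) {x : ℝ} (hx : x ≠ 0) :
    HasDerivAt (fun x => a + b / x) (-b / x ^ 2) x := by
  simpa [div_eq_mul_inv] using ((hasDerivAt_inv hx).const_mul b).const_add a

theorem objective_eq_mul_sub (a b v : ℝ) :
    (fun x => (a + b / x) * ((v + 1) * Real.exp x - 1)) =
      fun x => (v + 1) * ((a + b / x) * Real.exp x) - (a + b / x) := by
  funext x
  ring

theorem optimal_variance_strict_mono_general
    (a b : ℝ) (hb : 0 < b)
    (xmin : ℝ → ℝ)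
    (hxmin : ∀ v, 0 < v → xmin v ∈ Ioi (0 : ℝ) ∧
      IsMinOn (fun x => (a + b / x) * ((v + 1) * Real.exp x - 1)) (Ioi (0 : ℝ)) (xmin v)) :
    ∀ v₁ v₂ : ℝ, 0 < v₁ → v₁ < v₂ → xmin v₁ < xmin v₂ := by
  intro v₁ v₂ hv₁ hv
  obtain ⟨hx₁, hm₁⟩ := hxmin v₁ hv₁
  obtain ⟨hx₂, hm₂⟩ := hxmin v₂ (hv₁.trans hv)
  rw [objective_eq_mul_sub] at hm₁ hm₂
  have hc : v₁ + 1 < v₂ + 1 := by linarith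
  rcases lt_trichotomy (xmin v₁) (xmin v₂) with hlt | heq | hgt
  · exact hlt
  · have hg := hasDerivAt_const_add_div a b (ne_of_gt hx₁)
    have h₂ := hm₂.isLocalMin (Ioi_mem_nhds hx₂)
    rw [← heq] at h₂
    have hg' := hasDerivAt_eq_zero_of_isLocalMin_mul_sub hc.ne
      (hg.mul (Real.hasDerivAt_exp _)) hg (hm₁.isLocalMin (Ioi_mem_nhds hx₁)) h₂
    exact absurd hg' (div_neg_of_neg_of_pos (neg_neg_of_pos hb) (pow_pos hx₁ 2)).ne
  · have hg : a + b / xmin v₁ < a + b / xmin v₂ := by gcongr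
    have hG₁ := le_of_isMinOn_mul_sub_of_lt hc hx₁ hx₂ hm₁ hm₂
    have hG₂ := lt_of_isMinOn_mul_sub_of_lt (by linarith) hx₂ hm₁ hg
    exact absurd hG₁ hG₂.not_ge

/-- **Monotonicity of the optimal variance in the weight variance** (Lemma 4(ii),
monotonicity part).  Fix `a ≥ 0` and `b > 0`, and for each `v > 0` let `xmin v ∈ (0, ∞)`
be the (unique, by Lemma 4(i)) minimizer of `f_v(x) = (a + b/x)((v+1)e^x − 1)` on
`(0, ∞)`.  Then `v ↦ xmin v` is strictly increasing on `(0, ∞)`. -/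
theorem optimal_variance_strict_mono
    (a b : ℝ) (ha : 0 ≤ a) (hb : 0 < b)
    (xmin : ℝ → ℝ)
    (hxmin : ∀ v, 0 < v → xmin v ∈ Ioi (0 : ℝ) ∧
      IsMinOn (fun x => (a + b / x) * ((v + 1) * Real.exp x - 1)) (Ioi (0 : ℝ)) (xmin v)) :
    ∀ v₁ v₂ : ℝ, 0 < v₁ → v₁ < v₂ → xmin v₁ < xmin v₂ :=
  optimal_variance_strict_mono_general a b hb xmin hxmin
end

section
/- Limit of the optimal variance as the weight variance grows (Lemma 4(ii), limit part): Fix a ≥ 0 and b > 0 with a + b > 0, and for each v > 0 let x_min(v) denote the unique minimizer of f_v(x) = (a + b/x)((v+1)e^x − 1) on (0, ∞). Then x_min(v) → x_opt as v → ∞, where x_opt is the unique minimizer on (0, ∞) of CT*(x) = e^x (a + b/x); explicitly, x_opt = (−b + √(b² + 4ab))/(2a) if a > 0 and x_opt = 1 if a = 0. -/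
open Set Filter Topology

/-!
Write `g(x) = eˣ (a + b/x)` and `h(x) = a + b/x`, so that `f_v = (v + 1) g - h`. Since
`g'(x) = eˣ (a x² + b x - b) / x²`, the function `g` decreases up to the positive root `x_opt`
of `a x² + b x - b` and increases after it. Comparing `f_v(x_min) ≤ f_v(x_opt)` and using
`0 ≤ h ≤ g` gives `g(x_opt) ≤ g(x_min(v)) ≤ (1 + 1/v) g(x_opt)`, so `g(x_min(v)) → g(x_opt)`,
and a function that is strictly monotone on either side of its minimum only takes values near
the minimum value near the minimizer.
-/

/-- The cost `CT*(x) = eˣ (a + b/x)`. -/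
noncomputable def ctStar (a b x : ℝ) : ℝ := Real.exp x * (a + b / x)

/-- The positive root of `a x² + b x - b`. -/
noncomputable def optRoot (a b : ℝ) : ℝ :=
  if a = 0 then 1 else (-b + Real.sqrt (b ^ 2 + 4 * a * b)) / (2 * a)

theorem optRoot_pos {a b : ℝ} (ha : 0 ≤ a) (hb : 0 < b) : 0 < optRoot a b := by
  unfold optRoot
  split_ifs with h0
  · exact one_pos
  · have ha' : 0 < a := lt_of_le_of_ne ha (Ne.symm h0)
    have hsqrt : b < Real.sqrt (b ^ 2 + 4 * a * b) := by
      rw [Real.lt_sqrt hb.le]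
      nlinarith
    exact div_pos (by linarith) (by positivity)

theorem optRoot_isRoot {a b : ℝ} (ha : 0 ≤ a) (hb : 0 < b) :
    a * optRoot a b ^ 2 + b * optRoot a b - b = 0 := by
  unfold optRoot
  split_ifs with h0
  · rw [h0]; ring
  · have hsq : Real.sqrt (b ^ 2 + 4 * a * b) ^ 2 = b ^ 2 + 4 * a * b :=
      Real.sq_sqrt (by positivity)
    generalize Real.sqrt (b ^ 2 + 4 * a * b) = s at hsq
    field_simp
    linear_combination hsq

theorem hasDerivAt_ctStar (a b : ℝ) {x : ℝ} (hx : x ≠ 0) :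
    HasDerivAt (ctStar a b) (Real.exp x * ((a * x ^ 2 + b * x - b) / x ^ 2)) x := by
  have hrat : HasDerivAt (fun y : ℝ => a + b / y) ((0 * x - b * 1) / x ^ 2) x :=
    ((hasDerivAt_const x b).div (hasDerivAt_id x) hx).const_add a
  refine ((Real.hasDerivAt_exp x).mul hrat).congr_deriv ?_
  field_simp
  ring

theorem ctStar_continuousOn (a b : ℝ) {s : Set ℝ} (hs : ∀ x ∈ s, x ≠ 0) :
    ContinuousOn (ctStar a b) s :=
  Real.continuous_exp.continuousOn.mul
    (continuousOn_const.add (continuousOn_const.div continuousOn_id hs))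

section Monotonicity

variable {a b r : ℝ} (ha : 0 ≤ a) (hb : 0 < b) (hr : 0 < r)
  (hroot : a * r ^ 2 + b * r - b = 0)
include ha hb hr hroot

/-- `a x² + b x - b = (x - r) (a (x + r) + b)`, with a positive second factor. -/
theorem sign_deriv_ctStar {x : ℝ} (hx : 0 < x) :
    SignType.sign (deriv (ctStar a b) x) = SignType.sign (x - r) := by
  have hfactor : a * x ^ 2 + b * x - b = (x - r) * (a * (x + r) + b) := by
    linear_combination hroot
  have hpos : 0 < Real.exp x / x ^ 2 * (a * (x + r) + b) := by
    have : 0 ≤ a * (x + r) := by positivity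
    exact mul_pos (by positivity) (by linarith)
  rw [(hasDerivAt_ctStar a b hx.ne').deriv, hfactor,
    show Real.exp x * ((x - r) * (a * (x + r) + b) / x ^ 2)
      = Real.exp x / x ^ 2 * (a * (x + r) + b) * (x - r) by ring,
    sign_mul, sign_pos hpos, one_mul]

theorem ctStar_strictAntiOn : StrictAntiOn (ctStar a b) (Ioc 0 r) := by
  refine strictAntiOn_of_deriv_neg (convex_Ioc 0 r)
    (ctStar_continuousOn a b fun x hx => hx.1.ne') fun x hx => ?_
  rw [interior_Ioc] at hx
  have := sign_deriv_ctStar ha hb hr hroot hx.1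
  rwa [sign_neg (sub_neg.2 hx.2), sign_eq_neg_one_iff] at this

theorem ctStar_strictMonoOn : StrictMonoOn (ctStar a b) (Ici r) := by
  refine strictMonoOn_of_deriv_pos (convex_Ici r)
    (ctStar_continuousOn a b fun x hx => (hr.trans_le hx).ne') fun x hx => ?_
  rw [interior_Ici] at hx
  have := sign_deriv_ctStar ha hb hr hroot (hr.trans hx)
  rwa [sign_pos (sub_pos.2 hx), sign_eq_one_iff] at this

theorem ctStar_lt_of_ne {x : ℝ} (hx : 0 < x) (hne : x ≠ r) : ctStar a b r < ctStar a b x := by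
  rcases hne.lt_or_gt with hlt | hgt
  · exact ctStar_strictAntiOn ha hb hr hroot ⟨hx, hlt.le⟩ ⟨hr, le_rfl⟩ hlt
  · exact ctStar_strictMonoOn ha hb hr hroot self_mem_Ici hgt.le hgt

end Monotonicity

theorem tendsto_of_tendsto_comp_of_strictAntiOn_of_strictMonoOn {α : Type*} {l : Filter α}
    {u : α → ℝ} {g : ℝ → ℝ} {c x₀ : ℝ} (hanti : StrictAntiOn g (Ioc c x₀))
    (hmono : StrictMonoOn g (Ici x₀)) (hu : ∀ᶠ n in l, c < u n)
    (hgu : Tendsto (g ∘ u) l (𝓝 (g x₀))) : Tendsto u l (𝓝 x₀) := by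
  refine tendsto_order.2 ⟨fun y hy => ?_, fun y hy => ?_⟩
  · rcases le_or_gt y c with hyc | hcy
    · exact hu.mono fun n hn => hyc.trans_lt hn
    have hgy : g x₀ < g y := hanti ⟨hcy, hy.le⟩ ⟨hcy.trans hy, le_rfl⟩ hy
    filter_upwards [hu, (tendsto_order.1 hgu).2 _ hgy] with n hcn hgn
    by_contra! hny
    exact (hanti.antitoneOn ⟨hcn, hny.trans hy.le⟩ ⟨hcy, hy.le⟩ hny).not_gt hgn
  · have hgy : g x₀ < g y := hmono self_mem_Ici hy.le hy
    filter_upwards [(tendsto_order.1 hgu).2 _ hgy] with n hgn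
    by_contra! hny
    exact (hmono.monotoneOn (mem_Ici.2 hy.le) (mem_Ici.2 (hy.le.trans hny)) hny).not_gt hgn

/-- The objective is `(v + 1) g - h` with `g = ctStar a b` and `0 ≤ h = a + b/x ≤ g`. -/
theorem mul_ctStar_le_of_isMinOn {a b v m x : ℝ} (ha : 0 ≤ a) (hb : 0 ≤ b) (hm : 0 < m)
    (hx : 0 < x)
    (hmin : IsMinOn (fun x => (a + b / x) * ((v + 1) * Real.exp x - 1)) (Ioi 0) m) :
    v * ctStar a b m ≤ (v + 1) * ctStar a b x := by
  have hfx := isMinOn_iff.1 hmin x hx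
  have hhm : 0 ≤ a + b / m := by positivity
  have hhx : 0 ≤ a + b / x := by positivity
  have hhg : a + b / m ≤ ctStar a b m :=
    le_mul_of_one_le_left hhm (Real.one_le_exp hm.le)
  simp only [ctStar] at hhg ⊢
  nlinarith

theorem optimal_variance_limit_general
    (a b : ℝ) (ha : 0 ≤ a) (hb : 0 < b)
    (xmin : ℝ → ℝ)
    (hxmin : ∀ v, 0 < v → xmin v ∈ Ioi (0 : ℝ) ∧
      IsMinOn (fun x => (a + b / x) * ((v + 1) * Real.exp x - 1)) (Ioi (0 : ℝ)) (xmin v))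
    (xopt : ℝ)
    (hxopt : xopt = if a = 0 then 1 else (-b + Real.sqrt (b ^ 2 + 4 * a * b)) / (2 * a)) :
    (xopt ∈ Ioi (0 : ℝ) ∧
      ∀ x ∈ Ioi (0 : ℝ), x ≠ xopt →
        Real.exp xopt * (a + b / xopt) < Real.exp x * (a + b / x)) ∧
    Tendsto xmin atTop (nhds xopt) := by
  change xopt = optRoot a b at hxopt
  subst hxopt
  have hpos := optRoot_pos ha hb
  have hroot := optRoot_isRoot ha hb
  refine ⟨⟨hpos, fun x hx hne => ctStar_lt_of_ne ha hb hpos hroot hx hne⟩, ?_⟩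
  have hxmin_pos : ∀ᶠ v in atTop, 0 < xmin v :=
    (eventually_gt_atTop 0).mono fun v hv => (hxmin v hv).1
  have hupper : Tendsto (fun v : ℝ => (1 + v⁻¹) * ctStar a b (optRoot a b)) atTop
      (𝓝 (ctStar a b (optRoot a b))) := by
    simpa using (tendsto_inv_atTop_zero.const_add 1).mul_const (ctStar a b (optRoot a b))
  refine tendsto_of_tendsto_comp_of_strictAntiOn_of_strictMonoOn
    (ctStar_strictAntiOn ha hb hpos hroot) (ctStar_strictMonoOn ha hb hpos hroot) hxmin_pos
    (tendsto_of_tendsto_of_tendsto_of_le_of_le' tendsto_const_nhds hupper ?_ ?_)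
  · filter_upwards [hxmin_pos] with v hv
    rcases eq_or_ne (xmin v) (optRoot a b) with heq | hne
    · rw [Function.comp_apply, heq]
    · exact (ctStar_lt_of_ne ha hb hpos hroot hv hne).le
  · filter_upwards [eventually_gt_atTop 0] with v hv
    have := mul_ctStar_le_of_isMinOn ha hb.le (hxmin v hv).1 hpos (hxmin v hv).2
    calc ctStar a b (xmin v) = v⁻¹ * (v * ctStar a b (xmin v)) := by field_simp
      _ ≤ v⁻¹ * ((v + 1) * ctStar a b (optRoot a b)) := by gcongr
      _ = (1 + v⁻¹) * ctStar a b (optRoot a b) := by field_simp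

/-- **Limit of the optimal variance as the weight variance grows** (Lemma 4(ii), limit
part).  Fix `a ≥ 0` and `b > 0` with `a + b > 0`, and for each `v > 0` let
`xmin v ∈ (0, ∞)` be the (unique, by Lemma 4(i)) minimizer of
`f_v(x) = (a + b/x)((v+1)e^x − 1)` on `(0, ∞)`.  Then `xmin v → x_opt` as `v → ∞`, where
`x_opt` — explicitly equal to `(−b + √(b² + 4ab))/(2a)` if `a > 0` and to `1` if `a = 0` —
is the unique minimizer on `(0, ∞)` of `CT*(x) = e^x (a + b/x)`. -/
theorem optimal_variance_limit
    (a b : ℝ) (ha : 0 ≤ a) (hb : 0 < b) (hab : 0 < a + b)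
    (xmin : ℝ → ℝ)
    (hxmin : ∀ v, 0 < v → xmin v ∈ Ioi (0 : ℝ) ∧
      IsMinOn (fun x => (a + b / x) * ((v + 1) * Real.exp x - 1)) (Ioi (0 : ℝ)) (xmin v))
    (xopt : ℝ)
    (hxopt : xopt = if a = 0 then 1 else (-b + Real.sqrt (b ^ 2 + 4 * a * b)) / (2 * a)) :
    (xopt ∈ Ioi (0 : ℝ) ∧
      ∀ x ∈ Ioi (0 : ℝ), x ≠ xopt →
        Real.exp xopt * (a + b / xopt) < Real.exp x * (a + b / x)) ∧
    Tendsto xmin atTop (nhds xopt) :=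
  optimal_variance_limit_general a b ha hb xmin hxmin xopt hxopt
end
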